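/- Let $H$ be a finite simple graph with at least two edges in which every vertex has degree $\ell$ or $h$, where $h > \ell \ge 2$, the set $V_\ell$ of degree-$\ell$ vertices induces a subgraph with at most one edge, the set $V_h$ of degree-$h$ vertices induces a subgraph with at most one edge, and both $V_\ell$ and $V_h$ are nonempty. Then $|V_\ell| \ge 2$, and if $|V_\ell| = 2$ then $H$ is isomorphic to the diamond graph $K_2 + 2K_1$ (the join of an edge with two isolated vertices). -/

import Mathlib

/-!
A vertex `u` of degree `h` has at most one neighbour of degree `h`, because two such neighbours
would give two edges inside `V_h`. Hence `u` has at least `h - 1 ≥ ℓ ≥ 2` neighbours in `V_ℓ`.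
If `|V_ℓ| = 2` this forces `h = 3`, `ℓ = 2`, and every degree-3 vertex is adjacent to both
vertices of `V_ℓ` and to exactly one other degree-3 vertex. The degree-3 vertices therefore form
the single edge `uw` of `V_h`, both vertices of `V_ℓ` are already saturated by `u` and `w`, and
the graph is the diamond.
-/

/-- The diamond graph: `K₄` minus one edge, with the two degree-3 vertices `0, 1`
and the two nonadjacent degree-2 vertices `2, 3`. -/
def diamond : SimpleGraph (Fin 4) :=
  SimpleGraph.fromEdgeSet {s(0, 1), s(0, 2), s(0, 3), s(1, 2), s(1, 3)}

open Finset

namespace SimpleGraph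

variable {V : Type*} {G : SimpleGraph V}

variable (G) in
def AtMostOneEdgeOn (p : V → Prop) : Prop :=
  ∀ e₁ ∈ G.edgeSet, ∀ e₂ ∈ G.edgeSet, (∀ v ∈ e₁, p v) → (∀ v ∈ e₂, p v) → e₁ = e₂

theorem nonempty_iso_diamond {a b c d : V} (hcover : ∀ v, v = a ∨ v = b ∨ v = c ∨ v = d)
    (hab : G.Adj a b) (hac : G.Adj a c) (had : G.Adj a d) (hbc : G.Adj b c) (hbd : G.Adj b d)
    (hcd : c ≠ d) (hncd : ¬ G.Adj c d) : Nonempty (G ≃g diamond) := by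
  let f : Fin 4 → V := ![a, b, c, d]
  have hf : Function.Bijective f := by
    refine ⟨fun i j hij => ?_, fun v => ?_⟩
    · fin_cases i <;> fin_cases j <;>
        simp_all [f, hab.ne, hac.ne, had.ne, hbc.ne, hbd.ne, hab.ne.symm, hac.ne.symm,
          had.ne.symm, hbc.ne.symm, hbd.ne.symm, hcd.symm]
    · rcases hcover v with rfl | rfl | rfl | rfl
      exacts [⟨0, rfl⟩, ⟨1, rfl⟩, ⟨2, rfl⟩, ⟨3, rfl⟩]
  refine ⟨(⟨Equiv.ofBijective f hf, fun {i j} => ?_⟩ : diamond ≃g G).symm⟩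
  fin_cases i <;> fin_cases j <;>
    simp [f, diamond, hab, hac, had, hbc, hbd, hab.symm, hac.symm, had.symm, hbc.symm,
      hbd.symm, G.adj_comm d c, hncd]

theorem AtMostOneEdgeOn.sym2_eq {p : V → Prop} (hG : G.AtMostOneEdgeOn p) {a b c d : V}
    (hab : G.Adj a b) (hcd : G.Adj c d) (ha : p a) (hb : p b) (hc : p c) (hd : p d) :
    s(a, b) = s(c, d) :=
  hG _ hab _ hcd (by simp [ha, hb]) (by simp [hc, hd])

variable [Fintype V] [DecidableRel G.Adj] {p : V → Prop} [DecidablePred p]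

theorem degree_eq_card_filter_add_card_filter_not (v : V) :
    G.degree v = #((G.neighborFinset v).filter p) + #{x ∈ G.neighborFinset v | ¬ p x} := by
  rw [← card_neighborFinset_eq_degree]
  exact (card_filter_add_card_filter_not p).symm

theorem card_filter_neighborFinset_not_le (v : V) :
    #{x ∈ G.neighborFinset v | ¬ p x} ≤ #{x | ¬ p x} :=
  card_le_card (filter_subset_filter _ (subset_univ _))

theorem exists_adj_of_card_filter_not_lt_degree {v : V} (hdeg : #{x | ¬ p x} < G.degree v) :
    ∃ w, G.Adj v w ∧ p w := by
  have hsplit := G.degree_eq_card_filter_add_card_filter_not (p := p) v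
  have hnot := G.card_filter_neighborFinset_not_le (p := p) v
  obtain ⟨w, hw⟩ := card_pos.1 (show 0 < #((G.neighborFinset v).filter p) by omega)
  simp only [mem_filter, mem_neighborFinset] at hw
  exact ⟨w, hw⟩

namespace AtMostOneEdgeOn

theorem card_filter_neighborFinset_le_one (hG : G.AtMostOneEdgeOn p) {v : V} (hv : p v) :
    #((G.neighborFinset v).filter p) ≤ 1 := by
  refine card_le_one.2 fun a ha b hb => ?_
  simp only [mem_filter, mem_neighborFinset] at ha hb
  rcases Sym2.eq_iff.1 (hG.sym2_eq ha.1 hb.1 hv ha.2 hv hb.2) with ⟨-, hab⟩ | ⟨-, hav⟩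
  · exact hab
  · exact absurd hav.symm (G.ne_of_adj ha.1)

theorem degree_le_card_filter_not_add_one (hG : G.AtMostOneEdgeOn p) {v : V} (hv : p v) :
    G.degree v ≤ #{x | ¬ p x} + 1 := by
  have hsplit := G.degree_eq_card_filter_add_card_filter_not (p := p) v
  have hnot := G.card_filter_neighborFinset_not_le (p := p) v
  have := hG.card_filter_neighborFinset_le_one hv
  omega

theorem adj_of_card_filter_not_add_one_le_degree (hG : G.AtMostOneEdgeOn p) {v : V} (hv : p v)
    (hdeg : #{x | ¬ p x} + 1 ≤ G.degree v) {x : V} (hx : ¬ p x) : G.Adj v x := by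
  have hsplit := G.degree_eq_card_filter_add_card_filter_not (p := p) v
  have := hG.card_filter_neighborFinset_le_one hv
  have hsub : {y ∈ G.neighborFinset v | ¬ p y} ⊆ ({y | ¬ p y} : Finset V) :=
    filter_subset_filter _ (subset_univ _)
  have hx' : x ∈ ({y ∈ G.neighborFinset v | ¬ p y} : Finset V) := by
    rw [eq_of_subset_of_card_le hsub (by omega)]
    simpa using hx
  exact (G.mem_neighborFinset v x).1 (mem_filter.1 hx').1

end AtMostOneEdgeOn

theorem nonempty_iso_diamond_of_degree (hdeg : ∀ v, G.degree v = 2 ∨ G.degree v = 3)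
    (hG : G.AtMostOneEdgeOn (G.degree · = 3)) {u : V} (hu : G.degree u = 3)
    (hcard : #{v | ¬ G.degree v = 3} = 2) :
    Nonempty (G ≃g diamond) := by
  classical
  have hfull : ∀ v, G.degree v = 3 → #{x | ¬ G.degree x = 3} + 1 ≤ G.degree v := by omega
  obtain ⟨w, huw, hw⟩ := exists_adj_of_card_filter_not_lt_degree (hfull u hu)
  have hVh : ∀ z, G.degree z = 3 → z = u ∨ z = w := by
    intro z hz
    obtain ⟨z', hzz', hz'⟩ := exists_adj_of_card_filter_not_lt_degree (hfull z hz)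
    rcases Sym2.eq_iff.1 (hG.sym2_eq hzz' huw hz hz' hu hw) with ⟨rfl, -⟩ | ⟨rfl, -⟩ <;> simp
  obtain ⟨x, y, hxy, hVl⟩ := card_eq_two.1 hcard
  have hVl' : ∀ z, ¬ G.degree z = 3 ↔ z = x ∨ z = y := by simpa [Finset.ext_iff] using hVl
  have hx : ¬ G.degree x = 3 := (hVl' x).2 (.inl rfl)
  have hy : ¬ G.degree y = 3 := (hVl' y).2 (.inr rfl)
  have hsat : ∀ v z, G.degree v = 3 → ¬ G.degree z = 3 → G.Adj v z := fun v _ hv hz =>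
    hG.adj_of_card_filter_not_add_one_le_degree hv (hfull v hv) hz
  have hux := hsat u x hu hx
  have huy := hsat u y hu hy
  have hwx := hsat w x hw hx
  have hwy := hsat w y hw hy
  -- `x` already has its two neighbours `u` and `w`
  have hnxy : ¬ G.Adj x y := by
    intro hxy'
    have hsub : ({u, w, y} : Finset V) ⊆ G.neighborFinset x := by
      simp [insert_subset_iff, hux.symm, hwx.symm, hxy']
    have := card_le_card hsub
    rw [card_eq_three.2 ⟨u, w, y, huw.ne, huy.ne, hwy.ne, rfl⟩, card_neighborFinset_eq_degree]
      at this
    have := hdeg x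
    omega
  refine nonempty_iso_diamond (fun v => ?_) huw hux huy hwx hwy hxy hnxy
  by_cases hv : G.degree v = 3
  · rcases hVh v hv with rfl | rfl <;> simp
  · rcases (hVl' v).1 hv with rfl | rfl <;> simp

end SimpleGraph

theorem stmt_2_general {V : Type*} [Fintype V]
    (H : SimpleGraph V) [DecidableRel H.Adj]
    (ℓ h : ℕ) (hℓ : 2 ≤ ℓ) (hlh : ℓ < h)
    (hdeg : ∀ v : V, H.degree v = ℓ ∨ H.degree v = h)
    (hVh : ∀ e₁ ∈ H.edgeFinset, ∀ e₂ ∈ H.edgeFinset,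
      (∀ v ∈ e₁, H.degree v = h) → (∀ v ∈ e₂, H.degree v = h) → e₁ = e₂)
    (hVhne : ∃ v, H.degree v = h) :
    2 ≤ (Finset.univ.filter fun v => H.degree v = ℓ).card ∧
      ((Finset.univ.filter fun v => H.degree v = ℓ).card = 2 →
        Nonempty (H ≃g diamond)) := by
  obtain ⟨u, hu⟩ := hVhne
  have hG : H.AtMostOneEdgeOn (H.degree · = h) := fun e₁ he₁ e₂ he₂ =>
    hVh e₁ (SimpleGraph.mem_edgeFinset.2 he₁) e₂ (SimpleGraph.mem_edgeFinset.2 he₂)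
  have hVl : #{v | ¬ H.degree v = h} = #{v | H.degree v = ℓ} := by
    congr 1
    exact filter_congr fun v _ => by have := hdeg v; omega
  have hbound := hG.degree_le_card_filter_not_add_one hu
  refine ⟨by omega, fun hcard => ?_⟩
  obtain rfl : h = 3 := by omega
  obtain rfl : ℓ = 2 := by omega
  exact SimpleGraph.nonempty_iso_diamond_of_degree hdeg hG hu (hVl.trans hcard)

theorem stmt_2 {V : Type*} [Fintype V] [DecidableEq V]
    (H : SimpleGraph V) [DecidableRel H.Adj]
    (ℓ h : ℕ) (hℓ : 2 ≤ ℓ) (hlh : ℓ < h)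
    (hedges : 2 ≤ H.edgeFinset.card)
    (hdeg : ∀ v : V, H.degree v = ℓ ∨ H.degree v = h)
    (hVl : ∀ e₁ ∈ H.edgeFinset, ∀ e₂ ∈ H.edgeFinset,
      (∀ v ∈ e₁, H.degree v = ℓ) → (∀ v ∈ e₂, H.degree v = ℓ) → e₁ = e₂)
    (hVh : ∀ e₁ ∈ H.edgeFinset, ∀ e₂ ∈ H.edgeFinset,
      (∀ v ∈ e₁, H.degree v = h) → (∀ v ∈ e₂, H.degree v = h) → e₁ = e₂)
    (hVlne : ∃ v, H.degree v = ℓ) (hVhne : ∃ v, H.degree v = h) :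
    2 ≤ (Finset.univ.filter fun v => H.degree v = ℓ).card ∧
      ((Finset.univ.filter fun v => H.degree v = ℓ).card = 2 →
        Nonempty (H ≃g diamond)) :=
  stmt_2_general H ℓ h hℓ hlh hdeg hVh hVhne
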